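/- (Theorem 2, bias formula) Under the sub-population Bernoulli design with in-experiment probability p and treatment probability π, the bias of τ̂(p,π) = τ̂¹(p,π) + τ̂²(p,π) for the total treatment effect τ is E[τ̂(p,π) − τ] = −((1 − 2pπ)/n) Σ_{i ≠ j} ζ_{i,j}. -/

import Mathlib

open Finset

noncomputable section

/-- Real-valued indicator of a Boolean. -/
def ind (b : Bool) : ℝ := if b then 1 else 0

/-- Dyadic linear potential-outcome model for an ordered pair `(i, j)`:
`z_{i,j}(W) = α_{i,j} + β_{i,j} W_i + γ_{i,j} W_j + ζ_{i,j} W_i W_j`. -/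
def zDyad {n : ℕ} (α β γ ζ : Fin n → Fin n → ℝ) (W : Fin n → ℝ) (i j : Fin n) : ℝ :=
  α i j + β i j * W i + γ i j * W j + ζ i j * W i * W j

/-- Upstream-aggregated outcome `Y_j(W) = Σ_{i ≠ j} z_{i,j}(W)`. -/
def Yagg {n : ℕ} (α β γ ζ : Fin n → Fin n → ℝ) (W : Fin n → ℝ) (j : Fin n) : ℝ :=
  ∑ i ∈ ({j}ᶜ : Finset (Fin n)), zDyad α β γ ζ W i j

/-- Downstream-aggregated outcome (diffusion metric) `D_j(W) = Σ_{i ≠ j} z_{j,i}(W)`. -/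
def Dagg {n : ℕ} (α β γ ζ : Fin n → Fin n → ℝ) (W : Fin n → ℝ) (j : Fin n) : ℝ :=
  ∑ i ∈ ({j}ᶜ : Finset (Fin n)), zDyad α β γ ζ W j i

/-- Expectation over the sub-population design: `v ∈ {0,1}^n` are i.i.d. Bernoulli(`p`)
in-experiment indicators, `u ∈ {0,1}^n` are i.i.d. Bernoulli(`q`) treatment coins, all
`2n` variables mutually independent. -/
def expectVU (n : ℕ) (p q : ℝ) (f : (Fin n → Bool) → (Fin n → Bool) → ℝ) : ℝ :=
  ∑ v : Fin n → Bool, ∑ u : Fin n → Bool,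
    (∏ i, if v i then p else 1 - p) * (∏ i, if u i then q else 1 - q) * f v u

/-- Realized treatment in the sub-population design: `W_i = V_i U_i`
(units outside the experiment receive control). -/
def treatVU {n : ℕ} (v u : Fin n → Bool) : Fin n → ℝ :=
  fun i => ind (v i && u i)

/-- Horvitz–Thompson estimator built from `Y` in the sub-population design:
`τ̂¹(p,q)(v,u) = (1/n) Σ_i [V_i W_i Y_i(W)/(pq) − V_i (1 − W_i) Y_i(W)/(p(1 − q))]`. -/
def tauHat1Sub {n : ℕ} (α β γ ζ : Fin n → Fin n → ℝ) (p q : ℝ)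
    (v u : Fin n → Bool) : ℝ :=
  (1 / (n : ℝ)) * ∑ i,
    (ind (v i) * treatVU v u i * Yagg α β γ ζ (treatVU v u) i / (p * q) -
      ind (v i) * (1 - treatVU v u i) * Yagg α β γ ζ (treatVU v u) i / (p * (1 - q)))

/-- Horvitz–Thompson estimator built from `D` in the sub-population design. -/
def tauHat2Sub {n : ℕ} (α β γ ζ : Fin n → Fin n → ℝ) (p q : ℝ)
    (v u : Fin n → Bool) : ℝ :=
  (1 / (n : ℝ)) * ∑ i,
    (ind (v i) * treatVU v u i * Dagg α β γ ζ (treatVU v u) i / (p * q) -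
      ind (v i) * (1 - treatVU v u i) * Dagg α β γ ζ (treatVU v u) i / (p * (1 - q)))

/-! Every summand of τ̂ is the Horvitz–Thompson weight of a unit `i` times an outcome `z_{k,i}` or
`z_{i,k}`, which depends only on the designs of the two independent units `i ≠ k`. Against such a
function `φ(W_i, W_k)` the weight produces the difference `φ(1, W_k) − φ(0, W_k)` averaged over
`W_k ~ Bernoulli(pπ)`. For the bilinear model the pair contributes `γ_{k,i} + β_{i,k} + pπ(ζ_{k,i} + ζ_{i,k})`,
so every interaction `ζ_{i,j}` enters `E[τ̂]` with weight `2pπ` but enters `τ` with weight `1`. -/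

section

variable {ι α R : Type*} [Fintype ι] [DecidableEq ι] [Fintype α] [CommSemiring R]

theorem sum_pi_prod_mul_apply_mul_apply (μ : α → R) (hμ : ∑ a, μ a = 1) {i k : ι}
    (hik : i ≠ k) (g h : α → R) :
    ∑ x : ι → α, (∏ j, μ (x j)) * (g (x i) * h (x k)) =
      (∑ a, μ a * g a) * ∑ a, μ a * h a := by
  let F : ι → α → R := fun j a => μ a * (if j = i then g a else 1) * (if j = k then h a else 1)
  calc ∑ x : ι → α, (∏ j, μ (x j)) * (g (x i) * h (x k))
      = ∑ x : ι → α, ∏ j, F j (x j) := by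
        refine Fintype.sum_congr _ _ fun x => ?_
        rw [prod_mul_distrib, prod_mul_distrib, Fintype.prod_ite_eq', Fintype.prod_ite_eq',
          mul_assoc]
    _ = ∏ j, ∑ a, F j a := (Fintype.prod_sum F).symm
    _ = (∑ a, F i a) * ∑ a, F k a := by
        refine prod_eq_mul_of_mem i k (mem_univ i) (mem_univ k) hik fun j _ hj => ?_
        simpa [F, hj.1, hj.2] using hμ
    _ = (∑ a, μ a * g a) * ∑ a, μ a * h a := by simp [F, hik, hik.symm]

theorem sum_pi_prod_mul_apply_apply [DecidableEq α] (μ : α → R) (hμ : ∑ a, μ a = 1) {i k : ι}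
    (hik : i ≠ k) (F : α → α → R) :
    ∑ x : ι → α, (∏ j, μ (x j)) * F (x i) (x k) = ∑ a, ∑ b, μ a * μ b * F a b := by
  have hdelta : ∀ x : ι → α, F (x i) (x k) =
      ∑ a, ∑ b, F a b * ((if x i = a then 1 else 0) * (if x k = b then 1 else 0)) := by
    intro x
    simp [mul_ite]
  simp_rw [hdelta, mul_sum]
  rw [sum_comm]
  refine sum_congr rfl fun a _ => ?_
  rw [sum_comm]
  refine sum_congr rfl fun b _ => ?_
  have hprod := sum_pi_prod_mul_apply_mul_apply μ hμ hik
    (fun y => if y = a then (1 : R) else 0) (fun y => if y = b then (1 : R) else 0)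
  simp_rw [mul_left_comm _ (F a b), ← mul_sum, hprod]
  simp [mul_comm]

end

theorem sum_sum_compl_singleton_add_swap {ι M : Type*} [Fintype ι] [DecidableEq ι]
    [AddCommMonoid M] (f g : ι → ι → M) :
    ∑ i, ∑ k ∈ ({i}ᶜ : Finset ι), (f k i + g i k) =
      ∑ i, ∑ k ∈ ({i}ᶜ : Finset ι), (f k i + g k i) := by
  simp only [sum_add_distrib]
  congr 1
  exact sum_comm' fun i k => by simp [eq_comm]

def designWeight (p q : ℝ) (x : Bool × Bool) : ℝ :=
  (if x.1 then p else 1 - p) * (if x.2 then q else 1 - q)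

/-- The coefficient of `Y_i` in `n τ̂¹` (and of `D_i` in `n τ̂²`), as a function of `(V_i, U_i)`. -/
def htWeight (p q : ℝ) (a b : Bool) : ℝ :=
  ind a * ind (a && b) / (p * q) - ind a * (1 - ind (a && b)) / (p * (1 - q))

lemma sum_designWeight (p q : ℝ) : ∑ x, designWeight p q x = 1 := by
  simp only [designWeight, Fintype.sum_prod_type, Fintype.sum_bool, ↓reduceIte, Bool.false_eq_true]
  ring

section expectVU

variable {n : ℕ} (p q : ℝ)

lemma expectVU_eq_sum_pi (f : (Fin n → Bool) → (Fin n → Bool) → ℝ) :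
    expectVU n p q f = ∑ x : Fin n → Bool × Bool,
      (∏ j, designWeight p q (x j)) * f (fun j => (x j).1) (fun j => (x j).2) := by
  rw [expectVU, ← Fintype.sum_prod_type',
    ← (Equiv.arrowProdEquivProdArrow (Fin n) _ _).sum_comp]
  simp only [designWeight, prod_mul_distrib]
  rfl

lemma expectVU_apply_pair {i k : Fin n} (hik : i ≠ k) (F : Bool × Bool → Bool × Bool → ℝ) :
    expectVU n p q (fun v u => F (v i, u i) (v k, u k)) =
      ∑ a, ∑ b, designWeight p q a * designWeight p q b * F a b := by
  rw [expectVU_eq_sum_pi]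
  exact sum_pi_prod_mul_apply_apply _ (sum_designWeight p q) hik F

lemma expectVU_const_mul (c : ℝ) (f : (Fin n → Bool) → (Fin n → Bool) → ℝ) :
    expectVU n p q (fun v u => c * f v u) = c * expectVU n p q f := by
  simp only [expectVU, mul_sum]
  exact sum_congr rfl fun _ _ => sum_congr rfl fun _ _ => by ring

lemma expectVU_sum {κ : Type*} (s : Finset κ) (f : κ → (Fin n → Bool) → (Fin n → Bool) → ℝ) :
    expectVU n p q (fun v u => ∑ x ∈ s, f x v u) = ∑ x ∈ s, expectVU n p q (f x) := by
  simp only [expectVU, mul_sum]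
  exact (sum_congr rfl fun _ _ => sum_comm).trans sum_comm

end expectVU

lemma expectVU_htWeight_mul {n : ℕ} {p q : ℝ} (hp : p ≠ 0) (hq : q ≠ 0) (hq1 : 1 - q ≠ 0)
    {i k : Fin n} (hik : i ≠ k) (φ : ℝ → ℝ → ℝ) :
    expectVU n p q (fun v u => htWeight p q (v i) (u i) * φ (treatVU v u i) (treatVU v u k)) =
      p * q * (φ 1 1 - φ 0 1) + (1 - p * q) * (φ 1 0 - φ 0 0) := by
  refine (expectVU_apply_pair p q hik
    (fun a b => htWeight p q a.1 a.2 * φ (ind (a.1 && a.2)) (ind (b.1 && b.2)))).trans ?_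
  simp only [Fintype.sum_prod_type, Fintype.sum_bool, designWeight, htWeight, ind, Bool.and_true,
    Bool.and_false, ↓reduceIte, Bool.false_eq_true]
  field_simp
  ring

lemma tauHat1Sub_add_tauHat2Sub {n : ℕ} (α β γ ζ : Fin n → Fin n → ℝ) (p q : ℝ)
    (v u : Fin n → Bool) :
    tauHat1Sub α β γ ζ p q v u + tauHat2Sub α β γ ζ p q v u =
      (1 / (n : ℝ)) * ∑ i, ∑ k ∈ ({i}ᶜ : Finset (Fin n)), htWeight p q (v i) (u i) *
        (zDyad α β γ ζ (treatVU v u) k i + zDyad α β γ ζ (treatVU v u) i k) := by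
  simp only [tauHat1Sub, tauHat2Sub, ← mul_add, ← sum_add_distrib]
  congr 1
  refine sum_congr rfl fun i _ => ?_
  have hweight : ∀ Y, ind (v i) * treatVU v u i * Y / (p * q) -
      ind (v i) * (1 - treatVU v u i) * Y / (p * (1 - q)) = htWeight p q (v i) (u i) * Y :=
    fun Y => by unfold htWeight treatVU; ring
  rw [hweight, hweight, ← mul_add, Yagg, Dagg, ← sum_add_distrib, mul_sum]

lemma expectVU_htWeight_mul_zDyad_add {n : ℕ} (α β γ ζ : Fin n → Fin n → ℝ) {p q : ℝ}
    (hp : p ≠ 0) (hq : q ≠ 0) (hq1 : 1 - q ≠ 0) {i k : Fin n} (hik : i ≠ k) :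
    expectVU n p q (fun v u => htWeight p q (v i) (u i) *
        (zDyad α β γ ζ (treatVU v u) k i + zDyad α β γ ζ (treatVU v u) i k)) =
      γ k i + p * q * ζ k i + (β i k + p * q * ζ i k) := by
  have hpair := expectVU_htWeight_mul hp hq hq1 hik fun x y =>
    α k i + β k i * y + γ k i * x + ζ k i * y * x + (α i k + β i k * x + γ i k * y + ζ i k * x * y)
  simp only [zDyad]
  rw [hpair]
  ring

lemma sum_Yagg_one_sub_Yagg_zero {n : ℕ} (α β γ ζ : Fin n → Fin n → ℝ) :
    ∑ j, (Yagg α β γ ζ (fun _ => 1) j - Yagg α β γ ζ (fun _ => 0) j) =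
      ∑ j, ∑ i ∈ ({j}ᶜ : Finset (Fin n)), (β i j + γ i j + ζ i j) := by
  simp only [Yagg, zDyad, ← sum_sub_distrib]
  exact sum_congr rfl fun _ _ => sum_congr rfl fun _ _ => by ring

theorem bias_tauHatSub_combined_general
    (n : ℕ) (α β γ ζ : Fin n → Fin n → ℝ)
    (p q : ℝ) (hp0 : 0 < p) (hq0 : 0 < q) (hq1 : q < 1) :
    expectVU n p q (fun v u => tauHat1Sub α β γ ζ p q v u + tauHat2Sub α β γ ζ p q v u) -
        (1 / (n : ℝ)) *
          ∑ j, (Yagg α β γ ζ (fun _ => (1 : ℝ)) j - Yagg α β γ ζ (fun _ => (0 : ℝ)) j) =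
      -((1 - 2 * p * q) / (n : ℝ)) * ∑ j, ∑ i ∈ ({j}ᶜ : Finset (Fin n)), ζ i j := by
  have hE : expectVU n p q
        (fun v u => tauHat1Sub α β γ ζ p q v u + tauHat2Sub α β γ ζ p q v u) =
      (1 / (n : ℝ)) * ∑ j, ∑ i ∈ ({j}ᶜ : Finset (Fin n)), (β i j + γ i j + 2 * p * q * ζ i j) := by
    simp_rw [tauHat1Sub_add_tauHat2Sub, expectVU_const_mul, expectVU_sum]
    calc (1 / (n : ℝ)) * ∑ i, ∑ k ∈ ({i}ᶜ : Finset (Fin n)), _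
        = (1 / (n : ℝ)) * ∑ i, ∑ k ∈ ({i}ᶜ : Finset (Fin n)),
            ((γ k i + p * q * ζ k i) + (β i k + p * q * ζ i k)) := by
          refine congrArg _ (sum_congr rfl fun i _ => sum_congr rfl fun k hk => ?_)
          exact expectVU_htWeight_mul_zDyad_add α β γ ζ hp0.ne' hq0.ne' (sub_ne_zero.2 hq1.ne')
            (by simpa [eq_comm] using hk)
      _ = _ := by
          rw [sum_sum_compl_singleton_add_swap]
          exact congrArg _ (sum_congr rfl fun _ _ => sum_congr rfl fun _ _ => by ring)
  have hsummand : ∀ i j, β i j + γ i j + 2 * p * q * ζ i j - (β i j + γ i j + ζ i j) =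
      (2 * p * q - 1) * ζ i j := fun _ _ => by ring
  rw [hE, sum_Yagg_one_sub_Yagg_zero, ← mul_sub, ← sum_sub_distrib]
  simp_rw [← sum_sub_distrib, hsummand, ← mul_sum]
  ring

/-- Theorem 2, bias formula: Under the sub-population Bernoulli design
with in-experiment probability `p` and treatment probability `q`, the bias of the
combined estimator `τ̂(p,q) = τ̂¹(p,q) + τ̂²(p,q)` for the total treatment effect
`τ = (1/n) Σ_j (Y_j(1) − Y_j(0))` is
`E[τ̂(p,q) − τ] = −((1 − 2pq)/n) Σ_{i ≠ j} ζ_{i,j}`. -/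
theorem bias_tauHatSub_combined
    (n : ℕ) (hn : 1 ≤ n) (α β γ ζ : Fin n → Fin n → ℝ)
    (p q : ℝ) (hp0 : 0 < p) (hp1 : p ≤ 1) (hq0 : 0 < q) (hq1 : q < 1) :
    expectVU n p q (fun v u => tauHat1Sub α β γ ζ p q v u + tauHat2Sub α β γ ζ p q v u) -
        (1 / (n : ℝ)) *
          ∑ j, (Yagg α β γ ζ (fun _ => (1 : ℝ)) j - Yagg α β γ ζ (fun _ => (0 : ℝ)) j) =
      -((1 - 2 * p * q) / (n : ℝ)) * ∑ j, ∑ i ∈ ({j}ᶜ : Finset (Fin n)), ζ i j :=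
  bias_tauHatSub_combined_general n α β γ ζ p q hp0 hq0 hq1
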